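/- arXiv:1907.08047 — 2 statements merged into one kernel-verified Lean document; each statement's English description precedes it below -/
import Mathlib

section
/- Let τ > 0 be a random time, Z a random variable, W a Brownian motion, with τ, Z, W independent, and let ζ_t = W_{t∧τ} − ((t∧τ)/τ)W_τ + ((t∧τ)/τ)Z. Then for every t > 0, P(ζ_t = Z and τ > t) = 0; hence the process (1_{τ ≤ t}, t > 0) is a modification of (1_{ζ_t = Z}, t > 0). -/
open MeasureTheory ProbabilityTheory Real Set

noncomputable def gaussD (v x m : ℝ) : ℝ :=
  (Real.sqrt (2 * Real.pi * v))⁻¹ * Real.exp (-((x - m) ^ 2) / (2 * v))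

def IsBrownianMotion {Ω : Type*} [MeasurableSpace Ω] (P : Measure Ω)
    (W : ℝ → Ω → ℝ) : Prop :=
  (∀ ω, W 0 ω = 0) ∧ (∀ ω, Continuous fun t => W t ω) ∧
  (∀ t, Measurable (W t)) ∧
  (∀ s t : ℝ, 0 ≤ s → s ≤ t →
    P.map (fun ω => W t ω - W s ω) = gaussianReal 0 (t - s).toNNReal) ∧
  (∀ s t u v : ℝ, 0 ≤ s → s ≤ t → t ≤ u → u ≤ v →
    IndepFun (fun ω => W t ω - W s ω) (fun ω => W v ω - W u ω) P)

noncomputable def bridge {Ω : Type*} (W : ℝ → Ω → ℝ) (r z t : ℝ) (ω : Ω) : ℝ :=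
  W (min t r) ω - (min t r / r) * W r ω + (min t r / r) * z

noncomputable def rbridge {Ω : Type*} (W : ℝ → Ω → ℝ) (τ Z : Ω → ℝ) (t : ℝ) (ω : Ω) : ℝ :=
  bridge W (τ ω) (Z ω) t ω

def IndepLPW {Ω : Type*} [MeasurableSpace Ω] (P : Measure Ω) (τ Z : Ω → ℝ)
    (W : ℝ → Ω → ℝ) : Prop :=
  IndepFun τ Z P ∧ IndepFun (fun ω => (τ ω, Z ω)) (fun ω (t : ℝ) => W t ω) P

noncomputable def natFc {Ω : Type*} [MeasurableSpace Ω] (P : Measure Ω)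
    (X : ℝ → Ω → ℝ) (t : ℝ) : MeasurableSpace Ω :=
  (⨆ s ∈ Set.Iic t, MeasurableSpace.comap (X s) Real.measurableSpace) ⊔
    MeasurableSpace.generateFrom {s : Set Ω | P s = 0}

/-!
On `{τ ≤ t}` the bridge has already reached its pinning point, so `ζ_t = Z` there. On
`{t < τ}`, `ζ_t = Z` rearranges to `W_t = Z + t / (τ - t) * (W_τ - W_t)`. Since `(τ, Z)` is
independent of the path, Fubini reduces the probability of this event to that of
`W_t = z + t / (r - t) * (W_r - W_t)` for fixed `t < r` and `z`, which vanishes because the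
Gaussian `W_t` has no atoms and is independent of the increment `W_r - W_t`. Fubini needs
`(r, w) ↦ w r` to be jointly measurable, which holds on the subtype of continuous paths.
-/

section Independence

variable {Ω α β : Type*} [MeasurableSpace Ω] [MeasurableSpace α] [MeasurableSpace β]
  {P : Measure Ω} {X : Ω → α} {Y : Ω → β}

theorem ProbabilityTheory.IndepFun.measure_prod_mem_eq_zero_of_section [IsFiniteMeasure P]
    (hXY : IndepFun X Y P) (hX : Measurable X) (hY : Measurable Y) {S : Set (α × β)}
    (hS : MeasurableSet S) (hsection : ∀ x, P {ω | (x, Y ω) ∈ S} = 0) :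
    P {ω | (X ω, Y ω) ∈ S} = 0 := by
  have hlaw := (indepFun_iff_map_prod_eq_prod_map_map hX.aemeasurable hY.aemeasurable).mp hXY
  change P ((fun ω => (X ω, Y ω)) ⁻¹' S) = 0
  rw [← Measure.map_apply (hX.prodMk hY) hS, hlaw, Measure.prod_apply hS]
  refine (lintegral_congr fun x => ?_).trans lintegral_zero
  rw [Measure.map_apply hY (measurable_prodMk_left hS)]
  exact hsection x

theorem ProbabilityTheory.IndepFun.measure_eq_comp_eq_zero [IsFiniteMeasure P] [MeasurableEq α]
    (hYX : IndepFun Y X P) (hY : Measurable Y) (hX : Measurable X)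
    [NullSingletonClass (P.map X)] {f : β → α} (hf : Measurable f) :
    P {ω | X ω = f (Y ω)} = 0 :=
  hYX.measure_prod_mem_eq_zero_of_section hY hX
    (measurableSet_eq_fun measurable_snd (hf.comp measurable_fst))
    fun y => by
      have hy := measure_singleton (μ := P.map X) (f y)
      rwa [Measure.map_apply hX (measurableSet_singleton _)] at hy

theorem ProbabilityTheory.indepFun_subtype_mk_iff {p : β → Prop} (hp : ∀ ω, p (Y ω)) :
    IndepFun X (fun ω => (⟨Y ω, hp ω⟩ : Subtype p)) P ↔ IndepFun X Y P := by
  simp only [IndepFun, Kernel.IndepFun, Subtype.instMeasurableSpace, MeasurableSpace.comap_comp]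
  rfl

end Independence

theorem measurable_uncurry_apply_subtype_continuous {ι β : Type*} [TopologicalSpace ι]
    [TopologicalSpace.MetrizableSpace ι] [MeasurableSpace ι] [SecondCountableTopology ι]
    [OpensMeasurableSpace ι] [TopologicalSpace β] [TopologicalSpace.PseudoMetrizableSpace β]
    [MeasurableSpace β] [BorelSpace β] :
    Measurable (Function.uncurry fun i (w : {w : ι → β // Continuous w}) => w.1 i) :=
  measurable_uncurry_of_continuous_of_measurable (fun w => w.2)
    fun i => (measurable_pi_apply i).comp measurable_subtype_coe

section Bridge

variable {Ω : Type*}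

theorem bridge_of_le (W : ℝ → Ω → ℝ) {r t : ℝ} (hr : r ≠ 0) (hrt : r ≤ t) (z : ℝ) (ω : Ω) :
    bridge W r z t ω = z := by
  rw [bridge, min_eq_right hrt, div_self hr]
  ring

theorem bridge_of_lt (W : ℝ → Ω → ℝ) {r t : ℝ} (htr : t < r) (z : ℝ) (ω : Ω) :
    bridge W r z t ω = W t ω - t / r * W r ω + t / r * z := by
  rw [bridge, min_eq_left htr.le]

theorem measurable_bridge [MeasurableSpace Ω] {X : ℝ → Ω → ℝ}
    (hX : Measurable (Function.uncurry X)) (t : ℝ) :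
    Measurable fun p : (ℝ × ℝ) × Ω => bridge X p.1.1 p.1.2 t p.2 := by
  have hmin : Measurable fun p : (ℝ × ℝ) × Ω => min t p.1.1 :=
    measurable_const.min measurable_fst.fst
  have hX_min : Measurable fun p : (ℝ × ℝ) × Ω => X (min t p.1.1) p.2 :=
    hX.comp (hmin.prodMk measurable_snd)
  have hX_end : Measurable fun p : (ℝ × ℝ) × Ω => X p.1.1 p.2 :=
    hX.comp (measurable_fst.fst.prodMk measurable_snd)
  unfold bridge
  exact (hX_min.sub ((hmin.div measurable_fst.fst).mul hX_end)).add
    ((hmin.div measurable_fst.fst).mul measurable_fst.snd)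

end Bridge

namespace IsBrownianMotion

variable {Ω : Type*} [MeasurableSpace Ω] {P : Measure Ω} {W : ℝ → Ω → ℝ}

theorem continuous (hW : IsBrownianMotion P W) (ω : Ω) : Continuous fun t => W t ω :=
  hW.2.1 ω

theorem measurable (hW : IsBrownianMotion P W) (t : ℝ) : Measurable (W t) :=
  hW.2.2.1 t

theorem sub_zero_eq (hW : IsBrownianMotion P W) (t : ℝ) : (fun ω => W t ω - W 0 ω) = W t :=
  funext fun ω => by rw [hW.1 ω, sub_zero]

theorem map_eq_gaussianReal (hW : IsBrownianMotion P W) {t : ℝ} (ht : 0 ≤ t) :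
    P.map (W t) = gaussianReal 0 t.toNNReal := by
  simpa [hW.sub_zero_eq t] using hW.2.2.2.1 0 t le_rfl ht

theorem indepFun_sub (hW : IsBrownianMotion P W) {t r : ℝ} (ht : 0 ≤ t) (htr : t ≤ r) :
    IndepFun (fun ω => W r ω - W t ω) (W t) P := by
  simpa [hW.sub_zero_eq t] using (hW.2.2.2.2 0 t t r le_rfl ht le_rfl htr).symm

theorem measure_bridge_eq_pin_eq_zero [IsProbabilityMeasure P] (hW : IsBrownianMotion P W)
    {t r : ℝ} (ht : 0 < t) (htr : t < r) (z : ℝ) : P {ω | bridge W r z t ω = z} = 0 := by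
  have : NullSingletonClass (P.map (W t)) := by
    rw [hW.map_eq_gaussianReal ht.le]
    exact nullSingletonClass_gaussianReal (by simpa using ht)
  have hrt : r - t ≠ 0 := (sub_pos.mpr htr).ne'
  have hnull := (hW.indepFun_sub ht.le htr.le).measure_eq_comp_eq_zero
    ((hW.measurable r).sub (hW.measurable t)) (hW.measurable t)
    (f := fun y => z + t / (r - t) * y) (by fun_prop)
  have hr : r ≠ 0 := (ht.trans htr).ne'
  refine measure_mono_null (fun ω (hω : bridge W r z t ω = z) => ?_) hnull
  rw [bridge_of_lt W htr] at hω
  change W t ω = z + t / (r - t) * (W r ω - W t ω)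
  field_simp at hω ⊢
  linear_combination hω

end IsBrownianMotion

theorem stmt8 {Ω : Type*} [MeasurableSpace Ω] (P : Measure Ω) [IsProbabilityMeasure P]
    (W : ℝ → Ω → ℝ) (hW : IsBrownianMotion P W)
    (τ Z : Ω → ℝ) (hτ : Measurable τ) (hZ : Measurable Z) (hτpos : ∀ ω, 0 < τ ω)
    (hInd : IndepLPW P τ Z W) :
    ∀ t : ℝ, 0 < t →
      P {ω | rbridge W τ Z t ω = Z ω ∧ t < τ ω} = 0 ∧
      ((fun ω => if τ ω ≤ t then (1 : ℝ) else 0) =ᵐ[P]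
        fun ω => if rbridge W τ Z t ω = Z ω then (1 : ℝ) else 0) := by
  intro t ht
  let path : Ω → {w : ℝ → ℝ // Continuous w} := fun ω => ⟨fun s => W s ω, hW.continuous ω⟩
  have hpath : Measurable path := (measurable_pi_lambda _ hW.measurable).subtype_mk
  have hnull : P {ω | rbridge W τ Z t ω = Z ω ∧ t < τ ω} = 0 := by
    have hind : IndepFun (fun ω => (τ ω, Z ω)) path P :=
      (indepFun_subtype_mk_iff hW.continuous).2 hInd.2
    refine hind.measure_prod_mem_eq_zero_of_section (hτ.prodMk hZ) hpath
      (S := {p | bridge (fun s w => w.1 s) p.1.1 p.1.2 t p.2 = p.1.2 ∧ t < p.1.1}) ?_ ?_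
    · have hζ := measurable_bridge measurable_uncurry_apply_subtype_continuous t
      exact (measurableSet_eq_fun hζ measurable_fst.snd).inter
        (measurableSet_lt measurable_const measurable_fst.fst)
    · rintro ⟨r, z⟩
      by_cases hr : t < r
      · exact measure_mono_null (fun ω hω => hω.1) (hW.measure_bridge_eq_pin_eq_zero ht hr z)
      · simp [hr]
  refine ⟨hnull, measure_mono_null (fun ω hne => ?_) hnull⟩
  have hτt : t < τ ω := lt_of_not_ge fun hle =>
    hne (by simp [hle, rbridge, bridge_of_le W (hτpos ω).ne' hle])
  refine ⟨?_, hτt⟩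
  by_contra h
  exact hne (by simp [hτt.not_ge, h])
end

section
/- If Z is discrete with P(Z = z_i) = p_i, then for every t > 0, the conditional law of ζ_t given (τ, Z) = (r, z) has density q_t(x, r, z) = Σ_{i≥1} 1_{x = z_i} 1_{z = z_i} 1_{r ≤ t} + φ_{ζ^{r,z}_t}(x) ∏_{i≥1} 1_{x ≠ z_i} 1_{t < r} with respect to the σ-finite measure μ(dx) = dx + Σ_{i≥1} δ_{z_i}(dx). -/
open MeasureTheory ProbabilityTheory Real Set

/-!
Write `ζ_t = g ((τ, Z), W)` for a map `g` that is jointly measurable in the pinning data and the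
continuous path of `W`. Since `(τ, Z)` is independent of `W`, the conditional law of `ζ_t` given
`(τ, Z) = (r, z)` is the law of the deterministic bridge `ζ^{r,z}_t`: the Dirac mass at `z` when
`r ≤ t`, and for `t < r` the Gaussian of mean `t z / r` and variance `t (r - t) / r`, obtained from
the independent increments `W_t - W_0` and `W_r - W_t`. Both have density `q_t` with respect to `μ`:
Lebesgue measure does not see the countable set `{z_i}`, where the Gaussian part of `q_t` vanishes,
while the atoms of `μ` carry the Dirac mass at `z = z_i`.
-/

namespace ProbabilityTheory

variable {α β γ δ : Type*} [MeasurableSpace α] [MeasurableSpace β] [MeasurableSpace γ]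
  [MeasurableSpace δ]

noncomputable def Kernel.mapOfMeasure (ν : Measure γ) [SFinite ν] (g : β → γ → δ)
    (hg : Measurable (Function.uncurry g)) : Kernel β δ where
  toFun x := ν.map (g x)
  measurable' := by
    refine Measure.measurable_of_measurable_coe _ fun s hs => ?_
    simp_rw [Measure.map_apply hg.of_uncurry_left hs]
    exact measurable_measure_prodMk_left (hg hs)

lemma Kernel.mapOfMeasure_apply (ν : Measure γ) [SFinite ν] {g : β → γ → δ}
    (hg : Measurable (Function.uncurry g)) (x : β) :
    Kernel.mapOfMeasure ν g hg x = ν.map (g x) := rfl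

instance (ν : Measure γ) [IsFiniteMeasure ν] (g : β → γ → δ)
    (hg : Measurable (Function.uncurry g)) : IsFiniteKernel (Kernel.mapOfMeasure ν g hg) := by
  refine ⟨⟨ν univ, measure_lt_top ν univ, fun x => ?_⟩⟩
  rw [Kernel.mapOfMeasure_apply, Measure.map_apply hg.of_uncurry_left MeasurableSet.univ,
    preimage_univ]

lemma Measure.map_prod_eq_compProd_mapOfMeasure (μ : Measure β) (ν : Measure γ) [SFinite μ]
    [IsFiniteMeasure ν] {g : β → γ → δ} (hg : Measurable (Function.uncurry g)) :
    (μ.prod ν).map (fun c => (c.1, g c.1 c.2)) = μ ⊗ₘ Kernel.mapOfMeasure ν g hg := by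
  ext s hs
  have hG : Measurable fun c : β × γ => (c.1, g c.1 c.2) := measurable_fst.prodMk hg
  rw [Measure.map_apply hG hs, Measure.prod_apply (hG hs), Measure.compProd_apply hs]
  refine lintegral_congr fun x => ?_
  rw [Kernel.mapOfMeasure_apply, Measure.map_apply hg.of_uncurry_left
    (measurable_prodMk_left hs)]
  rfl

lemma condDistrib_ae_eq_map_of_indepFun [StandardBorelSpace δ] [Nonempty δ] {μ : Measure α}
    [IsProbabilityMeasure μ] {X : α → β} {Y : α → γ} (hX : Measurable X) (hY : Measurable Y)
    (hXY : IndepFun X Y μ) {g : β → γ → δ} (hg : Measurable (Function.uncurry g)) :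
    ∀ᵐ x ∂(μ.map X), condDistrib (fun a => g (X a) (Y a)) X μ x = (μ.map Y).map (g x) := by
  have hjoint : μ.map (fun a => (X a, g (X a) (Y a)))
      = μ.map X ⊗ₘ Kernel.mapOfMeasure (μ.map Y) g hg := by
    rw [← Measure.map_prod_eq_compProd_mapOfMeasure _ _ hg,
      ← (indepFun_iff_map_prod_eq_prod_map_map hX.aemeasurable hY.aemeasurable).mp hXY,
      Measure.map_map (measurable_fst.prodMk hg : Measurable fun c : β × γ => (c.1, g c.1 c.2))
        (hX.prodMk hY)]
    rfl
  exact condDistrib_ae_eq_of_measure_eq_compProd_of_measurable hX (hg.comp (hX.prodMk hY)) hjoint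

end ProbabilityTheory

/-- Continuous paths with the trace of the product σ-algebra of `ℝ → ℝ`: evaluation is then
jointly measurable, and independence of a process transfers to its path. -/
abbrev ContinuousPath : Type := {w : ℝ → ℝ // Continuous w}

lemma measurable_eval_continuousPath : Measurable fun c : ℝ × ContinuousPath => c.2.1 c.1 :=
  measurable_uncurry_of_continuous_of_measurable (u := fun s (w : ContinuousPath) => w.1 s)
    (fun w => w.2) (fun s => (measurable_pi_apply s).comp measurable_subtype_coe)

section Path

variable {Ω : Type*} [MeasurableSpace Ω] {W : ℝ → Ω → ℝ}

def pathOf (W : ℝ → Ω → ℝ) (hWc : ∀ ω, Continuous fun t => W t ω) (ω : Ω) : ContinuousPath :=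
  ⟨fun t => W t ω, hWc ω⟩

lemma measurable_pathOf (hWc : ∀ ω, Continuous fun t => W t ω) (hWm : ∀ t, Measurable (W t)) :
    Measurable (pathOf W hWc) :=
  (measurable_pi_lambda _ hWm).subtype_mk

lemma indepFun_pathOf {β : Type*} [MeasurableSpace β] {P : Measure Ω} {X : Ω → β}
    (hWc : ∀ ω, Continuous fun t => W t ω) (h : IndepFun X (fun ω t => W t ω) P) :
    IndepFun X (pathOf W hWc) P := by
  rw [indepFun_iff_measure_inter_preimage_eq_mul] at h ⊢
  rintro s A hs ⟨B, hB, rfl⟩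
  exact h s B hs hB

end Path

noncomputable def bridgePath (t : ℝ) (p : ℝ × ℝ) (w : ContinuousPath) : ℝ :=
  w.1 (min t p.1) - (min t p.1 / p.1) * w.1 p.1 + (min t p.1 / p.1) * p.2

lemma measurable_bridgePath (t : ℝ) : Measurable (Function.uncurry (bridgePath t)) := by
  have heval {f : (ℝ × ℝ) × ContinuousPath → ℝ} (hf : Measurable f) :
      Measurable fun c : (ℝ × ℝ) × ContinuousPath => c.2.1 (f c) :=
    measurable_eval_continuousPath.comp (hf.prodMk measurable_snd)
  have := heval (f := fun c => min t c.1.1) (by fun_prop)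
  have := heval (f := fun c => c.1.1) (by fun_prop)
  unfold Function.uncurry bridgePath
  fun_prop

lemma rbridge_eq_bridgePath {Ω : Type*} (W : ℝ → Ω → ℝ) (hWc : ∀ ω, Continuous fun t => W t ω)
    (τ Z : Ω → ℝ) (t : ℝ) :
    rbridge W τ Z t = fun ω => bridgePath t (τ ω, Z ω) (pathOf W hWc ω) := rfl

section BridgeLaw

variable {Ω : Type*} [MeasurableSpace Ω] {P : Measure Ω} {W : ℝ → Ω → ℝ}

lemma map_bridge_of_le [IsProbabilityMeasure P] {t r : ℝ} (z : ℝ) (hr : 0 < r) (hrt : r ≤ t) :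
    P.map (bridge W r z t) = Measure.dirac z := by
  have hconst : bridge W r z t = fun _ => z := by
    funext ω
    simp [bridge, min_eq_right hrt, div_self hr.ne']
  rw [hconst, Measure.map_const, measure_univ, one_smul]

/-- For `0 < t < r`, `bridge W r z t = (1 - t/r) (W t - W 0) - (t/r) (W r - W t) + (t/r) z` is
a sum of independent centred Gaussians with variances `(1 - t/r)² t` and `(t/r)² (r - t)`. -/
lemma map_bridge_of_lt (hW : IsBrownianMotion P W) {t r : ℝ} (z : ℝ) (ht : 0 < t) (htr : t < r) :
    P.map (bridge W r z t) = gaussianReal ((t / r) * z) (t * (r - t) / r).toNNReal := by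
  obtain ⟨hW0, -, hWm, hWlaw, hWind⟩ := hW
  have hr : 0 < r := ht.trans htr
  set a : ℝ := 1 - t / r
  set b : ℝ := -(t / r)
  have hfirst : HasLaw (fun ω => W t ω - W 0 ω) (gaussianReal 0 (t - 0).toNNReal) P :=
    ⟨((hWm t).sub (hWm 0)).aemeasurable, hWlaw 0 t le_rfl ht.le⟩
  have hsecond : HasLaw (fun ω => W r ω - W t ω) (gaussianReal 0 (r - t).toNNReal) P :=
    ⟨((hWm r).sub (hWm t)).aemeasurable, hWlaw t r ht.le htr.le⟩
  have hind : IndepFun (fun ω => a * (W t ω - W 0 ω)) (fun ω => b * (W r ω - W t ω)) P :=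
    (hWind 0 t t r le_rfl ht.le le_rfl htr.le).comp (measurable_const_mul a)
      (measurable_const_mul b)
  have hsum := gaussianReal_add_gaussianReal_of_indepFun hind
    (gaussianReal_const_mul hfirst a).map_eq (gaussianReal_const_mul hsecond b).map_eq
  have hdecomp : bridge W r z t = (fun x => x + (t / r) * z) ∘
      ((fun ω => a * (W t ω - W 0 ω)) + fun ω => b * (W r ω - W t ω)) := by
    funext ω
    simp only [bridge, min_eq_left htr.le, hW0 ω, Function.comp_apply, Pi.add_apply, a, b]
    field_simp
    ring
  rw [hdecomp, ← Measure.map_map (measurable_add_const _) (by fun_prop), hsum,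
    gaussianReal_map_add_const]
  congr 1
  · ring
  · ext
    have htr' : 0 ≤ r - t := by linarith
    simp only [NNReal.coe_add, NNReal.coe_mul, NNReal.coe_mk, sub_zero,
      Real.coe_toNNReal _ ht.le, Real.coe_toNNReal _ htr',
      Real.coe_toNNReal _ (div_nonneg (mul_nonneg ht.le htr') hr.le), a, b]
    field_simp
    ring

end BridgeLaw

section Density

variable {t : ℝ} {zs : ℕ → ℝ} {p : ℝ × ℝ}

noncomputable def pinMeasure (zs : ℕ → ℝ) : Measure ℝ :=
  volume + Measure.sum fun i => Measure.dirac (zs i)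

open scoped Classical in
noncomputable def bridgeDensity (t : ℝ) (zs : ℕ → ℝ) (p : ℝ × ℝ) (x : ℝ) : ENNReal :=
  ENNReal.ofReal (
    (∑' i, if x = zs i ∧ p.2 = zs i ∧ p.1 ≤ t then (1 : ℝ) else 0) +
    gaussD (t * (p.1 - t) / p.1) x ((t / p.1) * p.2) *
      (if (∀ i, x ≠ zs i) ∧ t < p.1 then 1 else 0))

lemma pinMeasure_withDensity (zs : ℕ → ℝ) (f : ℝ → ENNReal) :
    (pinMeasure zs).withDensity f
      = volume.withDensity f + Measure.sum fun i => f (zs i) • Measure.dirac (zs i) := by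
  simp only [pinMeasure, withDensity_add_measure, withDensity_sum, dirac_withDensity]

lemma bridgeDensity_of_notMem_range {x : ℝ} (hx : x ∉ range zs) :
    bridgeDensity t zs p x
      = ENNReal.ofReal (gaussD (t * (p.1 - t) / p.1) x ((t / p.1) * p.2) *
          (if t < p.1 then 1 else 0)) := by
  have hx' : ∀ i, x ≠ zs i := fun i hi => hx ⟨i, hi.symm⟩
  simp [bridgeDensity, hx']

lemma bridgeDensity_apply_zs (hinj : Function.Injective zs) (j : ℕ) :
    bridgeDensity t zs p (zs j) = if p.2 = zs j ∧ p.1 ≤ t then 1 else 0 := by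
  have hsum : (∑' i, if zs j = zs i ∧ p.2 = zs i ∧ p.1 ≤ t then (1 : ℝ) else 0)
      = if p.2 = zs j ∧ p.1 ≤ t then 1 else 0 := by
    rw [tsum_eq_single j fun i hi => if_neg fun h => hi (hinj h.1).symm]
    simp
  have hatom : ¬((∀ i, zs j ≠ zs i) ∧ t < p.1) := fun h => h.1 j rfl
  rw [bridgeDensity, hsum, if_neg hatom, mul_zero, add_zero]
  split_ifs <;> simp

lemma withDensity_bridgeDensity_of_le (hinj : Function.Injective zs) (hp : p.2 ∈ range zs)
    (hle : p.1 ≤ t) :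
    (pinMeasure zs).withDensity (bridgeDensity t zs p) = Measure.dirac p.2 := by
  obtain ⟨k, hk⟩ := hp
  have hvol : volume.withDensity (bridgeDensity t zs p) = 0 := by
    rw [← withDensity_zero]
    refine withDensity_congr_ae ?_
    filter_upwards [(countable_range zs).ae_notMem volume] with x hx
    simp [bridgeDensity_of_notMem_range hx, not_lt.mpr hle]
  rw [pinMeasure_withDensity, hvol, zero_add]
  ext s hs
  rw [Measure.sum_apply _ hs, tsum_eq_single k]
  · rw [Measure.smul_apply, bridgeDensity_apply_zs hinj, if_pos ⟨hk.symm, hle⟩, one_smul, hk]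
  · intro j hj
    rw [Measure.smul_apply, bridgeDensity_apply_zs hinj,
      if_neg fun h => hj (hinj (h.1.symm.trans hk.symm)), zero_smul]

lemma withDensity_bridgeDensity_of_lt (hinj : Function.Injective zs) (ht : 0 < t)
    (hlt : t < p.1) :
    (pinMeasure zs).withDensity (bridgeDensity t zs p)
      = gaussianReal ((t / p.1) * p.2) (t * (p.1 - t) / p.1).toNNReal := by
  have hv : 0 < t * (p.1 - t) / p.1 := div_pos (mul_pos ht (by linarith)) (ht.trans hlt)
  have hatoms : (Measure.sum fun i => bridgeDensity t zs p (zs i) • Measure.dirac (zs i)) = 0 := by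
    simp [bridgeDensity_apply_zs hinj, not_le.mpr hlt]
  rw [pinMeasure_withDensity, hatoms, add_zero,
    gaussianReal_of_var_ne_zero _ (by simpa using hv)]
  refine withDensity_congr_ae ?_
  filter_upwards [(countable_range zs).ae_notMem volume] with x hx
  simp [bridgeDensity_of_notMem_range hx, hlt, gaussianPDF, gaussianPDFReal, gaussD, hv.le]

end Density

open scoped Classical in
theorem stmt12_general {Ω : Type*} [MeasurableSpace Ω]
    (P : Measure Ω) [IsProbabilityMeasure P]
    (W : ℝ → Ω → ℝ) (hW : IsBrownianMotion P W)
    (τ Z : Ω → ℝ) (hτ : Measurable τ) (hZ : Measurable Z) (hτpos : ∀ ω, 0 < τ ω)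
    (hInd : IndepLPW P τ Z W)
    (zs : ℕ → ℝ) (hinj : Function.Injective zs) (hZd : ∀ ω, ∃ i, Z ω = zs i) :
    ∀ t : ℝ, 0 < t →
      ∀ᵐ p ∂(P.map fun ω => (τ ω, Z ω)),
        condDistrib (rbridge W τ Z t) (fun ω => (τ ω, Z ω)) P p =
          (volume + Measure.sum fun i => Measure.dirac (zs i)).withDensity (fun x =>
            ENNReal.ofReal (
              (∑' i, if x = zs i ∧ p.2 = zs i ∧ p.1 ≤ t then (1 : ℝ) else 0) +
              gaussD (t * (p.1 - t) / p.1) x ((t / p.1) * p.2) *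
                (if (∀ i, x ≠ zs i) ∧ t < p.1 then 1 else 0))) := by
  intro t ht
  have hWc : ∀ ω, Continuous fun s => W s ω := hW.2.1
  have hWm : ∀ s, Measurable (W s) := hW.2.2.1
  have hpZ : Measurable fun ω => (τ ω, Z ω) := hτ.prodMk hZ
  have hcond := condDistrib_ae_eq_map_of_indepFun hpZ (measurable_pathOf hWc hWm)
    (indepFun_pathOf hWc hInd.2) (measurable_bridgePath t)
  rw [← rbridge_eq_bridgePath W hWc] at hcond
  have hpos : ∀ᵐ p ∂(P.map fun ω => (τ ω, Z ω)), 0 < p.1 :=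
    (ae_map_iff hpZ.aemeasurable (measurableSet_lt measurable_const measurable_fst)).2
      (ae_of_all _ hτpos)
  have hatom : ∀ᵐ p ∂(P.map fun ω => (τ ω, Z ω)), p.2 ∈ range zs :=
    (ae_map_iff hpZ.aemeasurable (measurable_snd (countable_range zs).measurableSet)).2
      (ae_of_all _ fun ω => (hZd ω).imp fun _ h => h.symm)
  filter_upwards [hcond, hpos, hatom] with p hp hp1 hp2
  rw [hp, Measure.map_map ((measurable_bridgePath t).of_uncurry_left)
    (measurable_pathOf hWc hWm)]
  change P.map (bridge W p.1 p.2 t) = (pinMeasure zs).withDensity (bridgeDensity t zs p)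
  rcases le_or_gt p.1 t with hle | hlt
  · rw [map_bridge_of_le _ hp1 hle, withDensity_bridgeDensity_of_le hinj hp2 hle]
  · rw [map_bridge_of_lt hW _ ht hlt, withDensity_bridgeDensity_of_lt hinj ht hlt]

open scoped Classical in
theorem stmt12 {Ω : Type*} [MeasurableSpace Ω] [StandardBorelSpace Ω] [Nonempty Ω]
    (P : Measure Ω) [IsProbabilityMeasure P]
    (W : ℝ → Ω → ℝ) (hW : IsBrownianMotion P W)
    (τ Z : Ω → ℝ) (hτ : Measurable τ) (hZ : Measurable Z) (hτpos : ∀ ω, 0 < τ ω)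
    (hInd : IndepLPW P τ Z W)
    (zs : ℕ → ℝ) (hinj : Function.Injective zs) (hZd : ∀ ω, ∃ i, Z ω = zs i)
    (ps : ℕ → ℝ) (hps : ∀ i, P {ω | Z ω = zs i} = ENNReal.ofReal (ps i)) :
    ∀ t : ℝ, 0 < t →
      ∀ᵐ p ∂(P.map fun ω => (τ ω, Z ω)),
        condDistrib (rbridge W τ Z t) (fun ω => (τ ω, Z ω)) P p =
          (volume + Measure.sum fun i => Measure.dirac (zs i)).withDensity (fun x =>
            ENNReal.ofReal (
              (∑' i, if x = zs i ∧ p.2 = zs i ∧ p.1 ≤ t then (1 : ℝ) else 0) +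
              gaussD (t * (p.1 - t) / p.1) x ((t / p.1) * p.2) *
                (if (∀ i, x ≠ zs i) ∧ t < p.1 then 1 else 0))) :=
  stmt12_general P W hW τ Z hτ hZ hτpos hInd zs hinj hZd
end
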